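/- arXiv:1210.6038 — 2 statements merged into one kernel-verified Lean document; each statement's English description precedes it below -/
import Mathlib

section
/- The Jacobian matrix JF(x) of the map F : ℂ^8 → ℂ^6 given by F₁ = x₂x₃−x₁x₄, F₂ = x₁x₅+x₂x₆, F₃ = x₃x₅+x₄x₆, F₄ = x₁x₇+x₂x₈, F₅ = x₃x₇+x₄x₈, F₆ = x₆x₇−x₅x₈ has rank at most 5 at every point of ℂ^8, i.e., the 6×8 Jacobian of F has rank ≤ 5 for all x ∈ ℂ^8. -/
open Matrix

@[simp] lemma vec8_five {α : Type*} (a b c d e f g h : α) :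
    ![a,b,c,d,e,f,g,h] (5 : Fin 8) = f := rfl

@[simp] lemma vec8_six {α : Type*} (a b c d e f g h : α) :
    ![a,b,c,d,e,f,g,h] (6 : Fin 8) = g := rfl

@[simp] lemma vec8_seven {α : Type*} (a b c d e f g h : α) :
    ![a,b,c,d,e,f,g,h] (7 : Fin 8) = h := rfl

/-- If a nonzero vector annihilates the rows of a 6×8 matrix, its rank is at most 5. -/
lemma aux_rank_le {M : Matrix (Fin 6) (Fin 8) ℂ} (v : Fin 6 → ℂ) (hv : v ≠ 0)
    (h : Matrix.vecMul v M = 0) : M.rank ≤ 5 := by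
  rw [← Matrix.rank_transpose]
  have hk : v ∈ LinearMap.ker (Matrix.mulVecLin Mᵀ) := by
    simp [Matrix.mulVecLin_apply, Matrix.mulVec_transpose, h]
  have hnt : Nontrivial (LinearMap.ker (Matrix.mulVecLin Mᵀ)) :=
    ⟨⟨v, hk⟩, 0, fun he => hv (congrArg Subtype.val he)⟩
  have hpos : 0 < Module.finrank ℂ (LinearMap.ker (Matrix.mulVecLin Mᵀ)) :=
    Module.finrank_pos
  have hsum := LinearMap.finrank_range_add_finrank_ker (Matrix.mulVecLin Mᵀ)
  have hdom : Module.finrank ℂ (Fin 6 → ℂ) = 6 := by simp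
  rw [hdom] at hsum
  have : Mᵀ.rank = Module.finrank ℂ (LinearMap.range (Matrix.mulVecLin Mᵀ)) := rfl
  omega

/-- the 6×8 Jacobian matrix of F has rank at most 5 at every point of ℂ^8. -/
theorem stmt_2 (x₁ x₂ x₃ x₄ x₅ x₆ x₇ x₈ : ℂ) :
    Matrix.rank
      (!![-x₄, x₃, x₂, -x₁, 0, 0, 0, 0;
          x₅, x₆, 0, 0, x₁, x₂, 0, 0;
          0, 0, x₅, x₆, x₃, x₄, 0, 0;
          x₇, x₈, 0, 0, 0, 0, x₁, x₂;
          0, 0, x₇, x₈, 0, 0, x₃, x₄;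
          0, 0, 0, 0, -x₈, x₇, x₆, -x₅] : Matrix (Fin 6) (Fin 8) ℂ) ≤ 5 := by
  by_cases hall : (x₂*x₃ - x₁*x₄ = 0 ∧ x₁*x₅ + x₂*x₆ = 0 ∧ x₃*x₅ + x₄*x₆ = 0)
  · obtain ⟨h1, h2, h3⟩ := hall
    by_cases hA : (x₁ = 0 ∧ x₃ = 0 ∧ x₆ = 0)
    · obtain ⟨a1, a3, a6⟩ := hA
      by_cases hB : (x₂ = 0 ∧ x₄ = 0 ∧ x₅ = 0)
      · obtain ⟨b2, b4, b5⟩ := hB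
        apply aux_rank_le ![1, 0, 0, 0, 0, 0]
        · intro h; have := congrFun h 0; simp at this
        · funext j; fin_cases j <;>
            simp [Matrix.vecMul, dotProduct, Fin.sum_univ_succ, a1, a3, b2, b4]
      · apply aux_rank_le ![x₅, x₄, -x₂, 0, 0, 0]
        · intro h
          exact hB ⟨by simpa using congrFun h 2, by simpa using congrFun h 1,
            by simpa using congrFun h 0⟩
        · funext j; fin_cases j <;>
            simp [Matrix.vecMul, dotProduct, Fin.sum_univ_succ] <;>
            (try ring) <;> (try linear_combination h1) <;> (try linear_combination -h1) <;> (try linear_combination h2) <;> (try linear_combination -h2) <;> (try linear_combination h3) <;> (try linear_combination -h3)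
    · apply aux_rank_le ![x₆, -x₃, x₁, 0, 0, 0]
      · intro h
        exact hA ⟨by simpa using congrFun h 2, by simpa using congrFun h 1,
          by simpa using congrFun h 0⟩
      · funext j; fin_cases j <;>
          simp [Matrix.vecMul, dotProduct, Fin.sum_univ_succ] <;>
          (try ring) <;> (try linear_combination h1) <;> (try linear_combination -h1) <;> (try linear_combination h2) <;> (try linear_combination -h2) <;> (try linear_combination h3) <;> (try linear_combination -h3)
  · apply aux_rank_le
      ![x₆*x₇ - x₅*x₈, -(x₃*x₇ + x₄*x₈), x₁*x₇ + x₂*x₈,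
        x₃*x₅ + x₄*x₆, -(x₁*x₅ + x₂*x₆), x₂*x₃ - x₁*x₄]
    · intro h
      refine hall ⟨by simpa using congrFun h 5, ?_, by simpa using congrFun h 3⟩
      have := congrFun h 4; simp at this; linear_combination -this
    · funext j; fin_cases j <;>
        simp [Matrix.vecMul, dotProduct, Fin.sum_univ_succ] <;>
        ring
end

section
/- Let B(x,y) = x₀x₁x₂(y₀³+y₁³+y₂³) + y₀y₁y₂(x₀³+x₁³+x₂³) + x₀x₁x₂y₀y₁y₂ + Σ_{i,j=0}^{2} xᵢ³ y_{i+j}³ + Σ_{i,j=0}^{2} Σ_{k=±1} xᵢ²x_{i+k} y_{i+j}² y_{i+j+k} (indices mod 3), and let C(z₀,...,z₈) = z₀³ + z₀z₁z₂ + z₀z₁z₃ + z₀z₂z₆ + z₀z₃z₆ + z₁³ + z₁²z₆ + z₁z₂z₄ + z₁z₃z₄ + z₁z₄z₇ + z₁z₆² + z₂³ + z₂²z₃ + z₂²z₇ + z₂z₃² + z₂z₄z₅ + z₂z₄z₆ + z₂z₅z₈ + z₂z₆z₈ + z₂z₇² + z₃³ + z₃z₄z₅ + z₃z₄z₆ +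 z₄³ + z₄z₅z₇ + z₄z₆z₇ + z₅³ + z₅²z₆ + z₅z₆² + z₅z₇z₈ + z₆³ + z₆z₇z₈ + z₇³ + z₈³. Then under the substitution z_{3i+j} = xᵢyⱼ, C(z) = B(x,y) identically as polynomials in x₀,x₁,x₂,y₀,y₁,y₂. -/
open Finset in
/-- The bi-cubic polynomial B(x,y), indices taken modulo 3. -/
noncomputable def bicubic (x y : ZMod 3 → ℂ) : ℂ :=
  x 0 * x 1 * x 2 * (y 0 ^ 3 + y 1 ^ 3 + y 2 ^ 3)
    + y 0 * y 1 * y 2 * (x 0 ^ 3 + x 1 ^ 3 + x 2 ^ 3)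
    + x 0 * x 1 * x 2 * y 0 * y 1 * y 2
    + ∑ i : ZMod 3, ∑ j : ZMod 3, (x i) ^ 3 * (y (i + j)) ^ 3
    + ∑ i : ZMod 3, ∑ j : ZMod 3,
        ((x i) ^ 2 * x (i + 1) * (y (i + j)) ^ 2 * y (i + j + 1)
          + (x i) ^ 2 * x (i - 1) * (y (i + j)) ^ 2 * y (i + j - 1))

/-- under the Segrè substitution z_{3i+j} = xᵢyⱼ, the cubic C(z) equals
the bi-cubic B(x,y) identically. -/
theorem stmt_7 (x y : ZMod 3 → ℂ) (z : ZMod 3 → ZMod 3 → ℂ)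
    (hz : ∀ i j : ZMod 3, z i j = x i * y j) :
    z 0 0 ^ 3 + z 0 0 * z 0 1 * z 0 2 + z 0 0 * z 0 1 * z 1 0 + z 0 0 * z 0 2 * z 2 0
      + z 0 0 * z 1 0 * z 2 0 + z 0 1 ^ 3 + z 0 1 ^ 2 * z 2 0 + z 0 1 * z 0 2 * z 1 1
      + z 0 1 * z 1 0 * z 1 1 + z 0 1 * z 1 1 * z 2 1 + z 0 1 * z 2 0 ^ 2 + z 0 2 ^ 3
      + z 0 2 ^ 2 * z 1 0 + z 0 2 ^ 2 * z 2 1 + z 0 2 * z 1 0 ^ 2 + z 0 2 * z 1 1 * z 1 2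
      + z 0 2 * z 1 1 * z 2 0 + z 0 2 * z 1 2 * z 2 2 + z 0 2 * z 2 0 * z 2 2
      + z 0 2 * z 2 1 ^ 2 + z 1 0 ^ 3 + z 1 0 * z 1 1 * z 1 2 + z 1 0 * z 1 1 * z 2 0
      + z 1 1 ^ 3 + z 1 1 * z 1 2 * z 2 1 + z 1 1 * z 2 0 * z 2 1 + z 1 2 ^ 3
      + z 1 2 ^ 2 * z 2 0 + z 1 2 * z 2 0 ^ 2 + z 1 2 * z 2 1 * z 2 2 + z 2 0 ^ 3
      + z 2 0 * z 2 1 * z 2 2 + z 2 1 ^ 3 + z 2 2 ^ 3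
    = bicubic x y := by
  have sum3 : ∀ f : ZMod 3 → ℂ, ∑ i : ZMod 3, f i = f 0 + f 1 + f 2 := by
    intro f; exact Fin.sum_univ_three f
  simp only [bicubic, hz, sum3, show (3:ZMod 3) = 0 from rfl, show (4:ZMod 3) = 1 from rfl,
    show (5:ZMod 3) = 2 from rfl, show (-1:ZMod 3) = 2 from rfl,
    show ((0:ZMod 3) + 1 : ZMod 3) = 1 from rfl, show ((1:ZMod 3) + 1 : ZMod 3) = 2 from rfl,
    show ((2:ZMod 3) + 1 : ZMod 3) = 0 from rfl, show ((0:ZMod 3) + 2 : ZMod 3) = 2 from rfl,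
    show ((1:ZMod 3) + 2 : ZMod 3) = 0 from rfl, show ((2:ZMod 3) + 2 : ZMod 3) = 1 from rfl,
    show ((0:ZMod 3) - 1 : ZMod 3) = 2 from rfl, show ((1:ZMod 3) - 1 : ZMod 3) = 0 from rfl,
    show ((2:ZMod 3) - 1 : ZMod 3) = 1 from rfl, add_zero, zero_add]
  ring
end
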